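/- arXiv:2011.11150 — 11 statements merged into one kernel-verified Lean document; each statement's English description precedes it below -/
import Mathlib

section
/- Let d ≥ 1 and B ∈ ℝ^{d×d}. Then h_exp(B) = Tr(exp(B∘B)) − d = 0 if and only if its gradient ∇h_exp(B) = (exp(B∘B))ᵀ ∘ (2B) is the zero matrix, i.e., Tr(exp(B∘B)) = d if and only if (exp(B∘B))_{ij} · B_{ji} = 0 for all indices i, j. -/
open Matrix NormedSpace
open scoped Nat

/-!
For `A = B ⊙ B`, which is entrywise nonnegative, both
`tr (exp A) - d = ∑_{n ≥ 1} tr (Aⁿ) / n!` and `tr (exp A * A) = ∑_{n ≥ 0} tr (Aⁿ⁺¹) / n!`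
are series of nonnegative terms, so each vanishes exactly when `tr (Aⁿ) = 0` for all `n ≥ 1`.
On the other hand `tr (exp A * A)` is the sum of the nonnegative numbers
`(exp A)ᵢⱼ Aⱼᵢ = (exp A)ᵢⱼ Bⱼᵢ²`, so it vanishes iff every `(exp A)ᵢⱼ Bⱼᵢ` does.
-/

theorem HasSum.eq_zero_iff_of_nonneg {α : Type*} {f : α → ℝ} {a : ℝ} (hf : HasSum f a)
    (hf0 : ∀ x, 0 ≤ f x) : a = 0 ↔ ∀ x, f x = 0 := by
  constructor
  · rintro rfl
    exact funext_iff.mp ((hasSum_zero_iff_of_nonneg hf0).mp hf)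
  · intro h
    obtain rfl : f = 0 := funext h
    exact hf.unique hasSum_zero

theorem HasSum.eq_head_iff_of_nonneg {f : ℕ → ℝ} {a : ℝ} (hf : HasSum f a) (hf0 : ∀ n, 0 ≤ f n) :
    a = f 0 ↔ ∀ n, f (n + 1) = 0 := by
  have htail : HasSum (fun n => f (n + 1)) (a - f 0) := by
    simpa using (hasSum_nat_add_iff' 1).mpr hf
  rw [← sub_eq_zero]
  exact htail.eq_zero_iff_of_nonneg fun n => hf0 (n + 1)

namespace Matrix

variable {ι : Type*} [Fintype ι]

theorem trace_mul_eq_zero_iff_of_nonneg {R : Type*} [Semiring R] [PartialOrder R]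
    [IsOrderedRing R] {M N : Matrix ι ι R} (hM : ∀ i j, 0 ≤ M i j) (hN : ∀ i j, 0 ≤ N i j) :
    trace (M * N) = 0 ↔ ∀ i j, M i j * N j i = 0 := by
  simp only [trace, diag, mul_apply]
  rw [Finset.sum_eq_zero_iff_of_nonneg fun i _ =>
    Finset.sum_nonneg fun j _ => mul_nonneg (hM i j) (hN j i)]
  refine forall_congr' fun i => ?_
  rw [Finset.sum_eq_zero_iff_of_nonneg fun j _ => mul_nonneg (hM i j) (hN j i)]
  simp

variable [DecidableEq ι]

theorem hasSum_exp {𝕂 : Type*} [RCLike 𝕂] (A : Matrix ι ι 𝕂) :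
    HasSum (fun n => (n !⁻¹ : 𝕂) • A ^ n) (exp A) :=
  open scoped Norms.Operator in exp_series_hasSum_exp' A

theorem hasSum_trace_exp {𝕂 : Type*} [RCLike 𝕂] (A : Matrix ι ι 𝕂) :
    HasSum (fun n => (n !⁻¹ : 𝕂) * trace (A ^ n)) (trace (exp A)) := by
  simpa [Function.comp_def] using
    (hasSum_exp A).map (traceAddMonoidHom ι 𝕂) continuous_id.matrix_trace

theorem hasSum_trace_exp_mul_self {𝕂 : Type*} [RCLike 𝕂] (A : Matrix ι ι 𝕂) :
    HasSum (fun n => (n !⁻¹ : 𝕂) * trace (A ^ (n + 1))) (trace (exp A * A)) := by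
  simpa [Function.comp_def, smul_mul_assoc, ← pow_succ] using
    ((hasSum_exp A).mul_right A).map (traceAddMonoidHom ι 𝕂) continuous_id.matrix_trace

theorem exp_apply_nonneg {A : Matrix ι ι ℝ} (hA : ∀ i j, 0 ≤ A i j) (i j : ι) :
    0 ≤ exp A i j :=
  (Pi.hasSum.mp (Pi.hasSum.mp (hasSum_exp A) i) j).nonneg fun n =>
    mul_nonneg (by positivity) (pow_apply_nonneg hA n i j)

theorem trace_exp_eq_card_iff {A : Matrix ι ι ℝ} (hA : ∀ i j, 0 ≤ A i j) :
    trace (exp A) = Fintype.card ι ↔ ∀ n, trace (A ^ (n + 1)) = 0 := by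
  have := (hasSum_trace_exp A).eq_head_iff_of_nonneg fun n =>
    mul_nonneg (by positivity) (Finset.sum_nonneg fun i _ => pow_apply_nonneg hA n i i)
  simpa [Nat.factorial_ne_zero] using this

theorem trace_exp_mul_self_eq_zero_iff {A : Matrix ι ι ℝ} (hA : ∀ i j, 0 ≤ A i j) :
    trace (exp A * A) = 0 ↔ ∀ n, trace (A ^ (n + 1)) = 0 := by
  have := (hasSum_trace_exp_mul_self A).eq_zero_iff_of_nonneg fun n =>
    mul_nonneg (by positivity) (Finset.sum_nonneg fun i _ => pow_apply_nonneg hA (n + 1) i i)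
  simpa [Nat.factorial_ne_zero] using this

end Matrix

theorem notears_constraint_zero_iff_grad_zero_general
    (d : ℕ) (B : Matrix (Fin d) (Fin d) ℝ) :
    Matrix.trace (NormedSpace.exp (B ⊙ B)) = (d : ℝ) ↔
      ∀ i j : Fin d, (NormedSpace.exp (B ⊙ B)) i j * B j i = 0 := by
  have hA : ∀ i j, 0 ≤ (B ⊙ B) i j := fun i j => mul_self_nonneg (B i j)
  have key := (trace_exp_eq_card_iff hA).trans (trace_exp_mul_self_eq_zero_iff hA).symm
  rw [Fintype.card_fin] at key
  rw [key, trace_mul_eq_zero_iff_of_nonneg (exp_apply_nonneg hA) hA]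
  simp only [hadamard_apply, mul_eq_zero, or_self]

theorem notears_constraint_zero_iff_grad_zero
    (d : ℕ) (hd : 1 ≤ d) (B : Matrix (Fin d) (Fin d) ℝ) :
    Matrix.trace (NormedSpace.exp (B ⊙ B)) = (d : ℝ) ↔
      ∀ i j : Fin d, (NormedSpace.exp (B ⊙ B)) i j * B j i = 0 :=
  notears_constraint_zero_iff_grad_zero_general d B
end

section
/- Let d ≥ 1, c > 0 and B ∈ ℝ^{d×d}. Then h_bin(B) = Tr((I + c·B∘B)^d) − d = 0 if and only if its gradient ∇h_bin(B) = ((I + c·B∘B)^{d−1})ᵀ ∘ (2dc·B) is the zero matrix, i.e., Tr((I + c·B∘B)^d) = d if and only if ((I + c·B∘B)^{d−1})_{ij} · B_{ji} = 0 for all indices i, j. -/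
/-!
With `A = c • (B ⊙ B)`, entrywise nonnegative, the identity `(1 + A)^(l+1) = (1 + A)^l + (1 + A)^l A`
telescopes to `Tr ((1 + A)^d) = d + ∑_{l < d} ∑_{i,j} ((1 + A)^l)_{ij} A_{ji}`, a sum of
nonnegative terms. It vanishes iff every term does, and since `((1 + A)^l)_{ij}` is increasing in
`l`, iff the terms with `l = d - 1` do. Finally `A_{ji} = c B_{ji}²` has the same zeros as `B_{ji}`.
-/

open Matrix Finset

namespace Matrix

variable {n R : Type*} [DecidableEq n]

theorem one_add_apply_nonneg [Semiring R] [PartialOrder R] [IsOrderedRing R] {A : Matrix n n R}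
    (hA : ∀ i j, 0 ≤ A i j) (i j : n) : 0 ≤ (1 + A) i j := by
  by_cases h : i = j <;> simp [h, hA, add_nonneg]

variable [Fintype n]

theorem trace_one_add_pow_succ [Semiring R] (A : Matrix n n R) (k : ℕ) :
    trace ((1 + A) ^ (k + 1)) = trace ((1 + A) ^ k) + ∑ i, ∑ j, ((1 + A) ^ k) i j * A j i := by
  rw [pow_succ, mul_add, mul_one, trace_add]
  rfl

theorem trace_one_add_pow [Semiring R] (A : Matrix n n R) (k : ℕ) :
    trace ((1 + A) ^ k) =
      Fintype.card n + ∑ l ∈ range k, ∑ i, ∑ j, ((1 + A) ^ l) i j * A j i := by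
  induction k with
  | zero => simp
  | succ k ih => rw [trace_one_add_pow_succ, ih, sum_range_succ, add_assoc]

section OrderedRing

variable [Ring R] [PartialOrder R] [IsOrderedRing R] {A : Matrix n n R}

theorem one_add_pow_apply_mono (hA : ∀ i j, 0 ≤ A i j) (i j : n) :
    Monotone fun k : ℕ => ((1 + A) ^ k) i j := by
  refine monotone_nat_of_le_succ fun k => ?_
  rw [pow_succ, mul_add, mul_one, add_apply, le_add_iff_nonneg_right, mul_apply]
  exact sum_nonneg fun l _ =>
    mul_nonneg (pow_apply_nonneg (one_add_apply_nonneg hA) k i l) (hA l j)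

theorem trace_one_add_pow_succ_eq_card_iff (hA : ∀ i j, 0 ≤ A i j) (m : ℕ) :
    trace ((1 + A) ^ (m + 1)) = (Fintype.card n : R) ↔ ∀ i j, ((1 + A) ^ m) i j * A j i = 0 := by
  have hterm : ∀ (l : ℕ) i j, 0 ≤ ((1 + A) ^ l) i j * A j i := fun l i j =>
    mul_nonneg (pow_apply_nonneg (one_add_apply_nonneg hA) l i j) (hA j i)
  have hsum : ∀ l : ℕ, ∑ i, ∑ j, ((1 + A) ^ l) i j * A j i = 0 ↔
      ∀ i j, ((1 + A) ^ l) i j * A j i = 0 := fun l => by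
    rw [sum_eq_zero_iff_of_nonneg fun i _ => sum_nonneg fun j _ => hterm l i j]
    refine forall_congr' fun i => ?_
    simp [sum_eq_zero_iff_of_nonneg fun j _ => hterm l i j]
  rw [trace_one_add_pow, add_eq_left,
    sum_eq_zero_iff_of_nonneg fun l _ => sum_nonneg fun i _ => sum_nonneg fun j _ => hterm l i j]
  simp only [hsum, mem_range, Nat.lt_succ_iff]
  refine ⟨fun h => h m le_rfl, fun h l hl i j => le_antisymm ?_ (hterm l i j)⟩
  calc ((1 + A) ^ l) i j * A j i ≤ ((1 + A) ^ m) i j * A j i :=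
        mul_le_mul_of_nonneg_right (one_add_pow_apply_mono hA i j hl) (hA j i)
    _ = 0 := h i j

end OrderedRing

end Matrix

theorem poly_constraint_zero_iff_grad_zero
    (d : ℕ) (hd : 1 ≤ d) (c : ℝ) (hc : 0 < c) (B : Matrix (Fin d) (Fin d) ℝ) :
    Matrix.trace ((1 + c • (B ⊙ B)) ^ d) = (d : ℝ) ↔
      ∀ i j : Fin d, ((1 + c • (B ⊙ B)) ^ (d - 1)) i j * B j i = 0 := by
  have hA : ∀ i j, 0 ≤ (c • (B ⊙ B)) i j := fun i j => by
    simp only [Matrix.smul_apply, hadamard_apply, smul_eq_mul]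
    exact mul_nonneg hc.le (mul_self_nonneg _)
  obtain ⟨m, rfl⟩ : ∃ m, d = m + 1 := ⟨d - 1, by omega⟩
  have key := trace_one_add_pow_succ_eq_card_iff hA m
  rw [Fintype.card_fin] at key
  rw [key, Nat.add_sub_cancel]
  simp only [Matrix.smul_apply, hadamard_apply, smul_eq_mul, mul_eq_zero, hc.ne', false_or, or_self]
end

section
/- Let d ≥ 1 and B ∈ ℝ^{d×d}. If (exp(B∘B))_{ij} · B_{ji} = 0 for all indices i, j, then Tr(exp(B∘B)) = d. -/
/-!
Write `A = B ∘ B`. Since `(exp A)ᵢⱼ Bⱼᵢ = 0`, we get `Tr (exp A * A) = ∑ᵢⱼ (exp A)ᵢⱼ Bⱼᵢ² = 0`.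
Expanding the exponential, `Tr (exp A * A) = ∑ₙ Tr (A ^ (n + 1)) / n!`, a series of nonnegative
terms because `A` is entrywise nonnegative; hence `Tr (A ^ n) = 0` for all `n ≥ 1`, and only the
`n = 0` term `Tr 1 = d` survives in `Tr (exp A) = ∑ₙ Tr (A ^ n) / n!`.
-/

open Matrix NormedSpace
open scoped Nat

namespace Matrix

variable {ι 𝕂 : Type*} [Fintype ι] [DecidableEq ι] [RCLike 𝕂]

theorem hasSum_trace_exp_mul (A X : Matrix ι ι 𝕂) :
    HasSum (fun n : ℕ => (n !⁻¹ : 𝕂) * trace (A ^ n * X)) (trace (exp A * X)) := by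
  let L : Matrix ι ι 𝕂 →L[𝕂] 𝕂 :=
    LinearMap.toContinuousLinearMap ((traceLinearMap ι 𝕂 𝕂).comp (LinearMap.mulRight 𝕂 X))
  -- the operator norm only supplies a Banach algebra; its topology is the entrywise one
  have hexp : HasSum (fun n : ℕ => (n !⁻¹ : 𝕂) • A ^ n) (exp A) :=
    open scoped Norms.Operator in exp_series_hasSum_exp' A
  simpa [L, trace_smul] using L.hasSum hexp

theorem trace_exp_eq_card_of_trace_pow_succ_eq_zero {A : Matrix ι ι 𝕂}
    (h : ∀ n, trace (A ^ (n + 1)) = 0) : trace (exp A) = Fintype.card ι := by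
  have hsum := hasSum_trace_exp_mul A 1
  simp only [mul_one] at hsum
  refine hsum.unique ?_
  convert hasSum_single (f := fun n : ℕ => (n !⁻¹ : 𝕂) * trace (A ^ n)) 0 ?_ using 1
  · simp
  · rintro (_ | n) hn
    · exact absurd rfl hn
    · rw [h, mul_zero]

theorem trace_pow_succ_eq_zero_of_trace_exp_mul_self_eq_zero {A : Matrix ι ι ℝ}
    (hA : ∀ i j, 0 ≤ A i j) (h : trace (exp A * A) = 0) (n : ℕ) : trace (A ^ (n + 1)) = 0 := by
  have hnonneg : ∀ m : ℕ, 0 ≤ (m !⁻¹ : ℝ) * trace (A ^ m * A) := fun m =>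
    mul_nonneg (by positivity) (Finset.sum_nonneg fun i _ => pow_apply_nonneg hA (m + 1) i i)
  have hzero := (hasSum_zero_iff_of_nonneg hnonneg).mp (h ▸ hasSum_trace_exp_mul A A)
  simpa [← pow_succ, Nat.factorial_ne_zero] using congr_fun hzero n

end Matrix

theorem notears_grad_zero_imp_constraint_zero_general
    (d : ℕ) (B : Matrix (Fin d) (Fin d) ℝ)
    (h : ∀ i j : Fin d, (NormedSpace.exp (B ⊙ B)) i j * B j i = 0) :
    Matrix.trace (NormedSpace.exp (B ⊙ B)) = (d : ℝ) := by
  have hB : ∀ i j, 0 ≤ (B ⊙ B) i j := fun i j => mul_self_nonneg (B i j)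
  have hgrad : trace (exp (B ⊙ B) * (B ⊙ B)) = 0 := by
    refine Finset.sum_eq_zero fun i _ => ?_
    rw [diag_apply, mul_apply]
    exact Finset.sum_eq_zero fun j _ => by rw [hadamard_apply, ← mul_assoc, h i j, zero_mul]
  simpa using trace_exp_eq_card_of_trace_pow_succ_eq_zero
    (trace_pow_succ_eq_zero_of_trace_exp_mul_self_eq_zero hB hgrad)

theorem notears_grad_zero_imp_constraint_zero
    (d : ℕ) (hd : 1 ≤ d) (B : Matrix (Fin d) (Fin d) ℝ)
    (h : ∀ i j : Fin d, (NormedSpace.exp (B ⊙ B)) i j * B j i = 0) :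
    Matrix.trace (NormedSpace.exp (B ⊙ B)) = (d : ℝ) :=
  notears_grad_zero_imp_constraint_zero_general d B h
end

section
/- Let d ≥ 1, c > 0 and B ∈ ℝ^{d×d}. If Tr((I + c·B∘B)^d) = d, then for all indices i, j one has ((I + c·B∘B)^{d−1})_{ij} · B_{ji} = 0. -/
/-!
Write `M = 1 + N` with `N = c • (B ⊙ B)` entrywise nonnegative. Then
`(M ^ (n + 1)) i i = (M ^ n) i i + ∑ k, (M ^ n) i k * N k i`, so by induction every diagonal
entry of every power of `M` is at least `1`. A trace equal to the dimension therefore forces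
`(M ^ d) i i = 1`, and hence every nonnegative term `(M ^ (d - 1)) i k * N k i` vanishes;
since `c > 0`, `N k i = 0` only when `B k i = 0`.
-/

open Matrix

namespace Matrix

variable {ι α : Type*} [Ring α]

theorem pow_succ_one_add_apply_diag [Fintype ι] [DecidableEq ι] (N : Matrix ι ι α) (n : ℕ)
    (i : ι) :
    ((1 + N) ^ (n + 1)) i i = ((1 + N) ^ n) i i + ∑ k, ((1 + N) ^ n) i k * N k i := by
  rw [pow_succ, Matrix.mul_add, Matrix.mul_one, add_apply, mul_apply]

variable [LinearOrder α] [IsStrictOrderedRing α]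

theorem diag_eq_one_of_one_le_diag_of_trace_eq_card [Fintype ι] {A : Matrix ι ι α}
    (hA : ∀ i, 1 ≤ A i i) (htr : A.trace = Fintype.card ι) (i : ι) : A i i = 1 := by
  have hsum : ∑ _k : ι, (1 : α) = ∑ k, A k k := by simpa [trace] using htr.symm
  exact ((Finset.sum_eq_sum_iff_of_le fun k _ => hA k).mp hsum i (Finset.mem_univ i)).symm

theorem one_add_apply_nonneg_s4 [DecidableEq ι] {N : Matrix ι ι α} (hN : ∀ i j, 0 ≤ N i j)
    (i j : ι) : 0 ≤ (1 + N) i j := by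
  rw [add_apply, one_apply]
  exact add_nonneg (by split_ifs <;> simp) (hN i j)

variable [Fintype ι] [DecidableEq ι] {N : Matrix ι ι α}

theorem pow_one_add_apply_mul_nonneg (hN : ∀ i j, 0 ≤ N i j) (n : ℕ) (i k : ι) :
    0 ≤ ((1 + N) ^ n) i k * N k i :=
  mul_nonneg (pow_apply_nonneg (one_add_apply_nonneg_s4 hN) n i k) (hN k i)

theorem one_le_pow_one_add_apply_diag (hN : ∀ i j, 0 ≤ N i j) (n : ℕ) (i : ι) :
    1 ≤ ((1 + N) ^ n) i i := by
  induction n with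
  | zero => simp
  | succ n ih =>
    rw [pow_succ_one_add_apply_diag]
    exact ih.trans <| le_add_of_nonneg_right <|
      Finset.sum_nonneg fun k _ => pow_one_add_apply_mul_nonneg hN n i k

theorem pow_one_add_apply_mul_eq_zero_of_trace_eq_card (hN : ∀ i j, 0 ≤ N i j) {n : ℕ}
    (htr : ((1 + N) ^ (n + 1)).trace = Fintype.card ι) (i k : ι) :
    ((1 + N) ^ n) i k * N k i = 0 := by
  have hdiag := diag_eq_one_of_one_le_diag_of_trace_eq_card
    (one_le_pow_one_add_apply_diag hN (n + 1)) htr i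
  rw [pow_succ_one_add_apply_diag] at hdiag
  have hsum : ∑ k, ((1 + N) ^ n) i k * N k i = 0 :=
    le_antisymm ((add_le_iff_nonpos_right _).mp (hdiag ▸ one_le_pow_one_add_apply_diag hN n i))
      (Finset.sum_nonneg fun k _ => pow_one_add_apply_mul_nonneg hN n i k)
  exact (Finset.sum_eq_zero_iff_of_nonneg fun k _ => pow_one_add_apply_mul_nonneg hN n i k).mp
    hsum k (Finset.mem_univ k)

end Matrix

theorem poly_constraint_zero_imp_grad_zero_general
    (d : ℕ) (c : ℝ) (hc : 0 < c) (B : Matrix (Fin d) (Fin d) ℝ)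
    (h : Matrix.trace ((1 + c • (B ⊙ B)) ^ d) = (d : ℝ)) :
    ∀ i j : Fin d, ((1 + c • (B ⊙ B)) ^ (d - 1)) i j * B j i = 0 := by
  intro i j
  obtain ⟨n, rfl⟩ := Nat.exists_eq_add_one_of_ne_zero i.pos.ne'
  have hN : ∀ i j, 0 ≤ (c • (B ⊙ B)) i j := fun i j => by
    simpa using mul_nonneg hc.le (mul_self_nonneg (B i j))
  have hzero := pow_one_add_apply_mul_eq_zero_of_trace_eq_card hN (by simpa using h) i j
  simp only [Matrix.smul_apply, hadamard_apply, smul_eq_mul] at hzero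
  rcases mul_eq_zero.mp hzero with hM | hB
  · simp [hM]
  · simp [mul_self_eq_zero.mp ((mul_eq_zero.mp hB).resolve_left hc.ne')]

theorem poly_constraint_zero_imp_grad_zero
    (d : ℕ) (hd : 1 ≤ d) (c : ℝ) (hc : 0 < c) (B : Matrix (Fin d) (Fin d) ℝ)
    (h : Matrix.trace ((1 + c • (B ⊙ B)) ^ d) = (d : ℝ)) :
    ∀ i j : Fin d, ((1 + c • (B ⊙ B)) ^ (d - 1)) i j * B j i = 0 :=
  poly_constraint_zero_imp_grad_zero_general d c hc B h
end

section
/- Let d ≥ 1, c > 0 and B ∈ ℝ^{d×d}. If ((I + c·B∘B)^{d−1})_{ij} · B_{ji} = 0 for all indices i, j, then Tr((I + c·B∘B)^d) = d. -/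
/-!
Write `M = I + c • (B ⊙ B)`. Its entries are nonnegative and its diagonal entries are at least `1`,
so each entry `(M ^ k) i j` is nondecreasing in `k`. Hence the hypothesis forces
`(M ^ k) i j * B j i = 0` for every `k ≤ d - 1`, and then
`Tr (M ^ (k + 1)) = Tr (M ^ k) + c * ∑ i j, (M ^ k) i j * B j i * B j i = Tr (M ^ k)`.
Telescoping gives `Tr (M ^ d) = Tr (M ^ 0) = d`.
-/

open Matrix

namespace Matrix

variable {m n α : Type*}

lemma pow_apply_le_pow_succ_apply [Fintype n] [DecidableEq n] [Semiring α] [PartialOrder α]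
    [IsOrderedRing α] {A : Matrix n n α} (hA : ∀ i j, 0 ≤ A i j) (hdiag : ∀ i, 1 ≤ A i i)
    (k : ℕ) (i j : n) : (A ^ k) i j ≤ (A ^ (k + 1)) i j := by
  rw [pow_succ, mul_apply]
  calc (A ^ k) i j = (A ^ k) i j * 1 := (mul_one _).symm
    _ ≤ (A ^ k) i j * A j j := mul_le_mul_of_nonneg_left (hdiag j) (pow_apply_nonneg hA k i j)
    _ ≤ ∑ l, (A ^ k) i l * A l j :=
      Finset.single_le_sum (f := fun l => (A ^ k) i l * A l j)
        (fun l _ => mul_nonneg (pow_apply_nonneg hA k i l) (hA l j)) (Finset.mem_univ j)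

lemma monotone_pow_apply [Fintype n] [DecidableEq n] [Semiring α] [PartialOrder α] [IsOrderedRing α]
    {A : Matrix n n α} (hA : ∀ i j, 0 ≤ A i j) (hdiag : ∀ i, 1 ≤ A i i) (i j : n) :
    Monotone fun k : ℕ => (A ^ k) i j :=
  monotone_nat_of_le_succ fun k => pow_apply_le_pow_succ_apply hA hdiag k i j

lemma trace_mul_hadamard_eq_zero [Fintype m] [Fintype n] [NonUnitalSemiring α] {A : Matrix n m α}
    {B C : Matrix m n α} (h : ∀ i j, A i j * B j i = 0) : trace (A * (B ⊙ C)) = 0 := by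
  simp only [trace, diag, mul_apply, hadamard_apply, ← mul_assoc, h, zero_mul,
    Finset.sum_const_zero]

section OneAddSmulHadamardSelf

variable [DecidableEq n] [CommRing α] [LinearOrder α] [IsStrictOrderedRing α] {c : α}

lemma one_add_smul_hadamard_self_apply_nonneg (hc : 0 ≤ c) (B : Matrix n n α) (i j : n) :
    0 ≤ (1 + c • (B ⊙ B)) i j := by
  rw [add_apply, smul_apply, hadamard_apply, smul_eq_mul]
  exact add_nonneg (zero_le_one_elem i j) (mul_nonneg hc (mul_self_nonneg _))

lemma one_le_one_add_smul_hadamard_self_apply_self (hc : 0 ≤ c) (B : Matrix n n α) (i : n) :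
    1 ≤ (1 + c • (B ⊙ B)) i i := by
  rw [add_apply, one_apply_eq, smul_apply, hadamard_apply, smul_eq_mul]
  exact le_add_of_nonneg_right (mul_nonneg hc (mul_self_nonneg _))

end OneAddSmulHadamardSelf

end Matrix

theorem poly_grad_zero_imp_constraint_zero_general
    (d : ℕ) (c : ℝ) (hc : 0 < c) (B : Matrix (Fin d) (Fin d) ℝ)
    (h : ∀ i j : Fin d, ((1 + c • (B ⊙ B)) ^ (d - 1)) i j * B j i = 0) :
    Matrix.trace ((1 + c • (B ⊙ B)) ^ d) = (d : ℝ) := by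
  set M : Matrix (Fin d) (Fin d) ℝ := 1 + c • (B ⊙ B) with hM
  have hM_nonneg := one_add_smul_hadamard_self_apply_nonneg hc.le B
  have hM_diag := one_le_one_add_smul_hadamard_self_apply_self hc.le B
  have hvanish : ∀ k ≤ d - 1, ∀ i j, (M ^ k) i j * B j i = 0 := by
    intro k hk i j
    rcases eq_or_ne (B j i) 0 with hB | hB
    · rw [hB, mul_zero]
    · have hzero := (mul_eq_zero.mp (h i j)).resolve_right hB
      have hle := monotone_pow_apply hM_nonneg hM_diag i j hk
      rw [le_antisymm (hzero ▸ hle) (pow_apply_nonneg hM_nonneg k i j), zero_mul]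
  have hstep : ∀ k ≤ d - 1, trace (M ^ (k + 1)) = trace (M ^ k) := by
    intro k hk
    rw [pow_succ, hM, mul_add, mul_one, Matrix.mul_smul, trace_add, trace_smul,
      trace_mul_hadamard_eq_zero (hvanish k hk), smul_zero, add_zero]
  suffices ∀ k ≤ d, trace (M ^ k) = d from this d le_rfl
  intro k hk
  induction k with
  | zero => simp
  | succ k ih => rw [hstep k (by omega), ih (by omega)]

theorem poly_grad_zero_imp_constraint_zero
    (d : ℕ) (hd : 1 ≤ d) (c : ℝ) (hc : 0 < c) (B : Matrix (Fin d) (Fin d) ℝ)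
    (h : ∀ i j : Fin d, ((1 + c • (B ⊙ B)) ^ (d - 1)) i j * B j i = 0) :
    Matrix.trace ((1 + c • (B ⊙ B)) ^ d) = (d : ℝ) :=
  poly_grad_zero_imp_constraint_zero_general d c hc B h
end

section
/- (Convergence of the quadratic penalty method to a feasible point.) Let f, h : ℝ^{d×d} → ℝ be continuously differentiable (where ℝ^{d×d} carries the Frobenius norm). Suppose h satisfies: h(B) = 0 if and only if the Fréchet derivative of h at B is the zero functional. Let (ρ_k) be a sequence of positive reals with ρ_k → ∞, let (τ_k) be a bounded sequence of nonnegative reals, and let (B_k) be a sequence of matrices satisfying the inexact stationarity condition ‖Df(B_k) + ρ_k · h(B_k) · Dh(B_k)‖ ≤ τ_k for every k, where Df and Dh denote the Fréchet derivatives of f and h. Then every limit point B* of the sequence (B_k) (i.e., every B* that is the limit of (B_{k}) along some strictly increasing subsequence of indices) satisfies h(B*) = 0. -/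
open Matrix Filter Topology

attribute [local instance] Matrix.frobeniusNormedAddCommGroup Matrix.frobeniusNormedSpace

/-!
Write `g B = h B • Dh B`. Along the convergent subsequence `Df (B k)` stays bounded, and so does
`Df (B k) + ρ k • g (B k)` by the stationarity condition; since `ρ k → ∞`, this forces
`g (B k) → 0`. By continuity `g B* = 0`, so either `h B* = 0` or `Dh B* = 0`, and the
regularity assumption turns the second case into the first.
-/

theorem tendsto_nhds_zero_of_isBoundedUnder_add_smul {ι E : Type*} [NormedAddCommGroup E]
    [NormedSpace ℝ E] {l : Filter ι} {c : ι → ℝ} {a v : ι → E} (hc : Tendsto c l atTop)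
    (ha : IsBoundedUnder (· ≤ ·) l fun i => ‖a i‖)
    (hsum : IsBoundedUnder (· ≤ ·) l fun i => ‖a i + c i • v i‖) :
    Tendsto v l (𝓝 0) := by
  have hdiff : IsBoundedUnder (· ≤ ·) l fun i => ‖(a i + c i • v i) - a i‖ :=
    (isBoundedUnder_le_add hsum ha).mono_le (.of_forall fun _ => norm_sub_le _ _)
  have hsmul := (tendsto_inv_atTop_zero.comp hc).zero_smul_isBoundedUnder_le hdiff
  refine hsmul.congr' ?_
  filter_upwards [hc.eventually_ne_atTop 0] with i hci
  simp [smul_smul, inv_mul_cancel₀ hci]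

theorem qpm_limit_point_feasible_general
    (d : ℕ)
    (f h : Matrix (Fin d) (Fin d) ℝ → ℝ)
    (hf : ContDiff ℝ 1 f) (hh : ContDiff ℝ 1 h)
    (hreg : ∀ B : Matrix (Fin d) (Fin d) ℝ, h B = 0 ↔ fderiv ℝ h B = 0)
    (ρ : ℕ → ℝ) (hρ : Tendsto ρ atTop atTop)
    (τ : ℕ → ℝ) (hτbdd : ∃ C : ℝ, ∀ k, τ k ≤ C)
    (B : ℕ → Matrix (Fin d) (Fin d) ℝ)
    (hstat : ∀ k, (fderiv ℝ f (B k) + (ρ k * h (B k)) • fderiv ℝ h (B k)).opNorm ≤ τ k)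
    (Bstar : Matrix (Fin d) (Fin d) ℝ)
    (φ : ℕ → ℕ) (hφ : StrictMono φ)
    (hlim : Tendsto (fun n => B (φ n)) atTop (nhds Bstar)) :
    h Bstar = 0 := by
  -- the Frobenius instances are local, so instance search does not find the dual-space norm
  let : NormedAddCommGroup (Matrix (Fin d) (Fin d) ℝ →L[ℝ] ℝ) :=
    ContinuousLinearMap.toNormedAddCommGroup
  let : NormedSpace ℝ (Matrix (Fin d) (Fin d) ℝ →L[ℝ] ℝ) := ContinuousLinearMap.toNormedSpace
  set g := fun M => h M • fderiv ℝ h M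
  have hg_lim : Tendsto (fun n => g (B (φ n))) atTop (𝓝 (g Bstar)) :=
    ((hh.continuous.smul (hh.continuous_fderiv one_ne_zero)).tendsto Bstar).comp hlim
  have hDf_bdd : IsBoundedUnder (· ≤ ·) atTop fun n => ‖fderiv ℝ f (B (φ n))‖ :=
    (((hf.continuous_fderiv one_ne_zero).tendsto Bstar).comp hlim).norm.isBoundedUnder_le
  have hstat_bdd : IsBoundedUnder (· ≤ ·) atTop
      fun n => ‖fderiv ℝ f (B (φ n)) + ρ (φ n) • g (B (φ n))‖ := by
    obtain ⟨C, hC⟩ := hτbdd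
    refine isBoundedUnder_of ⟨C, fun n => ?_⟩
    simp only [g, smul_smul]
    exact (hstat (φ n)).trans (hC (φ n))
  have hg_zero : Tendsto (fun n => g (B (φ n))) atTop (𝓝 0) :=
    tendsto_nhds_zero_of_isBoundedUnder_add_smul (hρ.comp hφ.tendsto_atTop) hDf_bdd hstat_bdd
  rcases smul_eq_zero.mp (tendsto_nhds_unique hg_lim hg_zero) with hzero | hDh_zero
  · exact hzero
  · exact (hreg Bstar).mpr hDh_zero

/-- Convergence of the quadratic penalty method to a feasible point: if `h B = 0` exactly when
the Fréchet derivative of `h` at `B` vanishes, the penalty coefficients `ρ k` tend to infinity,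
the tolerances `τ k` are nonnegative and bounded, and each iterate `B k` satisfies the inexact
stationarity condition `‖Df (B k) + ρ k * h (B k) • Dh (B k)‖ ≤ τ k`, then every limit point of
the sequence of iterates is feasible. -/
theorem qpm_limit_point_feasible
    (d : ℕ)
    (f h : Matrix (Fin d) (Fin d) ℝ → ℝ)
    (hf : ContDiff ℝ 1 f) (hh : ContDiff ℝ 1 h)
    (hreg : ∀ B : Matrix (Fin d) (Fin d) ℝ, h B = 0 ↔ fderiv ℝ h B = 0)
    (ρ : ℕ → ℝ) (hρpos : ∀ k, 0 < ρ k) (hρ : Tendsto ρ atTop atTop)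
    (τ : ℕ → ℝ) (hτnonneg : ∀ k, 0 ≤ τ k) (hτbdd : ∃ C : ℝ, ∀ k, τ k ≤ C)
    (B : ℕ → Matrix (Fin d) (Fin d) ℝ)
    (hstat : ∀ k, (fderiv ℝ f (B k) + (ρ k * h (B k)) • fderiv ℝ h (B k)).opNorm ≤ τ k)
    (Bstar : Matrix (Fin d) (Fin d) ℝ)
    (φ : ℕ → ℕ) (hφ : StrictMono φ)
    (hlim : Tendsto (fun n => B (φ n)) atTop (nhds Bstar)) :
    h Bstar = 0 :=
  qpm_limit_point_feasible_general d f h hf hh hreg ρ hρ τ hτbdd B hstat Bstar φ hφ hlim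
end

section
/- (Gradient of the NOTEARS constraint.) Let d ≥ 1 and B ∈ ℝ^{d×d}. The function B ↦ Tr(exp(B∘B)) is Fréchet differentiable at B, with derivative given by the linear map H ↦ Σ_{i,j} ((exp(B∘B))ᵀ ∘ 2B)_{ij} · H_{ij}; equivalently, its gradient with respect to the Frobenius inner product is the matrix (exp(B∘B))ᵀ ∘ (2B). -/
/-!
Let `τ` be any tracial functional, i.e. `τ (a * b) = τ (b * a)`. The derivative of `a ↦ aⁿ` at
`x` is `h ↦ ∑ xⁱ h xʲ` over `i + j = n - 1`, and cyclicity collapses each term under `τ` to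
`τ (xⁿ⁻¹ h)`, so `a ↦ τ (aⁿ)` has derivative `n τ (xⁿ⁻¹ ·)`. The exponential series can then be
differentiated term by term (the derivatives are dominated on balls by `‖τ‖ Rⁿ⁻¹ / (n-1)!`),
and `∑ n/n! xⁿ⁻¹ = exp x` gives the derivative `h ↦ τ (exp x * h)` of `τ ∘ exp`. With `τ = trace`
and the chain rule through `A ↦ A ⊙ A`, whose derivative is `H ↦ 2 B ⊙ H`, the derivative at `B`
is `H ↦ Tr (exp (B ⊙ B) * (2 B ⊙ H)) = ⟨exp (B ⊙ B)ᵀ ⊙ 2 B, H⟩`.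
-/

open Matrix

attribute [local instance] Matrix.frobeniusNormedAddCommGroup Matrix.frobeniusNormedSpace

open NormedSpace
open scoped Nat

theorem norm_pow_mul_le {R : Type*} [SeminormedRing R] (a b : R) (n : ℕ) :
    ‖a ^ n * b‖ ≤ ‖a‖ ^ n * ‖b‖ := by
  induction n generalizing b with
  | zero => simp
  | succ n ih =>
    calc ‖a ^ (n + 1) * b‖ = ‖a ^ n * (a * b)‖ := by rw [pow_succ, mul_assoc]
      _ ≤ ‖a‖ ^ n * ‖a * b‖ := ih _
      _ ≤ ‖a‖ ^ n * (‖a‖ * ‖b‖) := by gcongr; exact norm_mul_le a b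
      _ = ‖a‖ ^ (n + 1) * ‖b‖ := by ring

theorem inv_factorial_succ_mul_succ {K : Type*} [Field K] [CharZero K] (n : ℕ) :
    (((n + 1)! : K))⁻¹ * ((n : K) + 1) = ((n ! : K))⁻¹ := by
  rw [Nat.factorial_succ, Nat.cast_mul, Nat.cast_succ, mul_inv, mul_comm, ← mul_assoc,
    mul_inv_cancel₀ (by norm_cast), one_mul]

section Tracial

variable {𝕜 𝔸 F : Type*} [RCLike 𝕜] [NormedRing 𝔸] [NormedAlgebra 𝕜 𝔸]
  [NormedAddCommGroup F] [NormedSpace 𝕜 F]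

variable (𝕜) in
noncomputable def traceForm (τ : 𝔸 →L[𝕜] F) : 𝔸 →L[𝕜] 𝔸 →L[𝕜] F :=
  (ContinuousLinearMap.compL 𝕜 𝔸 𝔸 F τ).comp (ContinuousLinearMap.mul 𝕜 𝔸)

@[simp] theorem traceForm_apply (τ : 𝔸 →L[𝕜] F) (a h : 𝔸) : traceForm 𝕜 τ a h = τ (a * h) :=
  rfl

theorem norm_traceForm_pow_le (τ : 𝔸 →L[𝕜] F) (a : 𝔸) (n : ℕ) :
    ‖traceForm 𝕜 τ (a ^ n)‖ ≤ ‖τ‖ * ‖a‖ ^ n :=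
  ContinuousLinearMap.opNorm_le_bound _ (by positivity) fun h =>
    calc ‖τ (a ^ n * h)‖ ≤ ‖τ‖ * ‖a ^ n * h‖ := τ.le_opNorm _
      _ ≤ ‖τ‖ * (‖a‖ ^ n * ‖h‖) := by gcongr; exact norm_pow_mul_le a h n
      _ = ‖τ‖ * ‖a‖ ^ n * ‖h‖ := by ring

theorem hasFDerivAt_tracial_pow (τ : 𝔸 →L[𝕜] F) (hτ : ∀ a b, τ (a * b) = τ (b * a))
    (n : ℕ) (x : 𝔸) :
    HasFDerivAt (fun a => τ (a ^ n)) ((n : 𝕜) • traceForm 𝕜 τ (x ^ (n - 1))) x := by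
  refine (τ.hasFDerivAt.comp x (hasFDerivAt_pow' n)).congr_fderiv ?_
  ext h
  have cyclic : ∀ i ∈ Finset.range n, τ (x ^ (n - 1 - i) * h * x ^ i) = τ (x ^ (n - 1) * h) := by
    intro i hi
    rw [hτ, ← mul_assoc, ← pow_add,
      Nat.add_sub_of_le (Nat.le_sub_one_of_lt (Finset.mem_range.mp hi))]
  simp [Finset.sum_congr rfl cyclic, Nat.cast_smul_eq_nsmul]

theorem hasFDerivAt_tracial_exp [CompleteSpace 𝔸] [CompleteSpace F] (τ : 𝔸 →L[𝕜] F)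
    (hτ : ∀ a b, τ (a * b) = τ (b * a)) (x : 𝔸) :
    HasFDerivAt (fun a => τ (exp a)) (traceForm 𝕜 τ (exp x)) x := by
  -- balls are preconnected as convex sets of the underlying real space
  let _ : NormedSpace ℝ 𝔸 := NormedSpace.restrictScalars ℝ 𝕜 𝔸
  set R := ‖x‖ + 1
  set f' : ℕ → 𝔸 → 𝔸 →L[𝕜] F := fun n y => ((n ! : 𝕜)⁻¹ * n) • traceForm 𝕜 τ (y ^ (n - 1))
  have hderiv : ∀ n y, HasFDerivAt (fun a => (n ! : 𝕜)⁻¹ • τ (a ^ n)) (f' n y) y := fun n y =>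
    ((hasFDerivAt_tracial_pow τ hτ n y).const_smul (n ! : 𝕜)⁻¹).congr_fderiv (smul_smul ..)
  have hbound : ∀ n, ∀ y ∈ Metric.ball 0 R,
      ‖f' n y‖ ≤ ‖τ‖ * ((n ! : ℝ)⁻¹ * n * R ^ (n - 1)) := by
    intro n y hy
    have hy : ‖y‖ ≤ R := (mem_ball_zero_iff.mp hy).le
    calc ‖f' n y‖ = (n ! : ℝ)⁻¹ * n * ‖traceForm 𝕜 τ (y ^ (n - 1))‖ := by simp [f', norm_smul]
      _ ≤ (n ! : ℝ)⁻¹ * n * (‖τ‖ * R ^ (n - 1)) := by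
        gcongr
        exact (norm_traceForm_pow_le τ y _).trans (by gcongr)
      _ = _ := by ring
  have hbound_summable : Summable fun n => ‖τ‖ * ((n ! : ℝ)⁻¹ * n * R ^ (n - 1)) := by
    refine .mul_left _ ((summable_nat_add_iff 1).mp ?_)
    simpa [inv_factorial_succ_mul_succ, div_eq_inv_mul] using Real.summable_pow_div_factorial R
  have hsummable_at : Summable fun n => (n ! : 𝕜)⁻¹ • τ (x ^ n) := by
    simpa using (expSeries_summable' (𝕂 := 𝕜) x).mapL τ
  have hsum : HasSum (fun n => f' n x) (traceForm 𝕜 τ (exp x)) := by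
    rw [← hasSum_nat_add_iff' 1]
    simpa [f', inv_factorial_succ_mul_succ] using
      (exp_series_hasSum_exp' (𝕂 := 𝕜) x).mapL (traceForm 𝕜 τ)
  have hexp : (fun a => τ (exp a)) = fun a => ∑' n, (n ! : 𝕜)⁻¹ • τ (a ^ n) := by
    ext a
    rw [exp_eq_tsum 𝕜, τ.map_tsum (expSeries_summable' a)]
    simp
  have hx : x ∈ Metric.ball 0 R := by simp [R]
  rw [hexp, ← hsum.tsum_eq]
  exact hasFDerivAt_tsum_of_isPreconnected hbound_summable Metric.isOpen_ball
    Metric.isPreconnected_ball (fun n y _ => hderiv n y) hbound hx hsummable_at hx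

end Tracial

theorem ContinuousLinearMap.hasFDerivAt_apply_self {𝕜 E F : Type*} [NontriviallyNormedField 𝕜]
    [NormedAddCommGroup E] [NormedSpace 𝕜 E] [NormedAddCommGroup F] [NormedSpace 𝕜 F]
    (b : E →L[𝕜] E →L[𝕜] F) (hb : ∀ x y, b x y = b y x) (x : E) :
    HasFDerivAt (fun y => b y y) ((2 : 𝕜) • b x) x :=
  (b.hasFDerivAt_of_bilinear (hasFDerivAt_id x) (hasFDerivAt_id x)).congr_fderiv <| by
    ext h
    simp [hb h x, two_smul]

theorem Matrix.trace_mul_hadamard {n α : Type*} [Fintype n] [CommSemiring α]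
    (A B C : Matrix n n α) :
    trace (A * (B ⊙ C)) = ∑ i, ∑ j, (Aᵀ ⊙ B) i j * C i j := by
  simp only [trace, diag_apply, mul_apply, hadamard_apply, transpose_apply, mul_assoc]
  exact Finset.sum_comm

noncomputable def Matrix.traceCLM (n 𝕜 : Type*) [RCLike 𝕜] [Fintype n] : Matrix n n 𝕜 →L[𝕜] 𝕜 :=
  LinearMap.toContinuousLinearMap (traceLinearMap n 𝕜 𝕜)

section Hadamard

variable {𝕜 m n : Type*} [RCLike 𝕜] [Fintype m] [Fintype n]

variable (𝕜 m n) in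
noncomputable def Matrix.hadamardCLM : Matrix m n 𝕜 →L[𝕜] Matrix m n 𝕜 →L[𝕜] Matrix m n 𝕜 :=
  LinearMap.toContinuousLinearMap <| LinearMap.toContinuousLinearMap.toLinearMap ∘ₗ
    LinearMap.mk₂ 𝕜 (· ⊙ ·) (fun _ _ _ => add_hadamard _ _ _) (fun _ _ _ => smul_hadamard _ _ _)
      (fun _ _ _ => hadamard_add _ _ _) (fun _ _ _ => hadamard_smul _ _ _)

theorem Matrix.hasFDerivAt_hadamard_self (A : Matrix m n 𝕜) :
    HasFDerivAt (fun X : Matrix m n 𝕜 => X ⊙ X) ((2 : 𝕜) • hadamardCLM 𝕜 m n A) A :=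
  (hadamardCLM 𝕜 m n).hasFDerivAt_apply_self (fun X Y => hadamard_comm X Y) A

end Hadamard

attribute [local instance] Matrix.frobeniusNormedRing Matrix.frobeniusNormedAlgebra

theorem notears_constraint_hasFDerivAt_general
    (d : ℕ) (B : Matrix (Fin d) (Fin d) ℝ) :
    ∃ L : Matrix (Fin d) (Fin d) ℝ →L[ℝ] ℝ,
      HasFDerivAt (fun A : Matrix (Fin d) (Fin d) ℝ =>
          Matrix.trace (NormedSpace.exp (A ⊙ A))) L B ∧
      ∀ H : Matrix (Fin d) (Fin d) ℝ,
        L H = ∑ i : Fin d, ∑ j : Fin d,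
          ((NormedSpace.exp (B ⊙ B))ᵀ ⊙ ((2 : ℝ) • B)) i j * H i j := by
  have trace_tracial : ∀ X Y : Matrix (Fin d) (Fin d) ℝ,
      traceCLM (Fin d) ℝ (X * Y) = traceCLM (Fin d) ℝ (Y * X) :=
    trace_mul_comm
  have hderiv := (hasFDerivAt_tracial_exp _ trace_tracial (B ⊙ B)).comp (f := fun X => X ⊙ X) B
    (hasFDerivAt_hadamard_self B)
  refine ⟨_, hderiv, fun H => ?_⟩
  change trace (exp (B ⊙ B) * ((2 : ℝ) • (B ⊙ H))) = _
  rw [← smul_hadamard, trace_mul_hadamard]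

/-- Gradient of the NOTEARS constraint: `B ↦ Tr(exp(B∘B))` is Fréchet differentiable at `B`,
with derivative `H ↦ ⟨(exp(B∘B))ᵀ ∘ 2B, H⟩_F`; i.e. its Frobenius gradient is
`(exp(B∘B))ᵀ ∘ (2B)`. -/
theorem notears_constraint_hasFDerivAt
    (d : ℕ) (hd : 1 ≤ d) (B : Matrix (Fin d) (Fin d) ℝ) :
    ∃ L : Matrix (Fin d) (Fin d) ℝ →L[ℝ] ℝ,
      HasFDerivAt (fun A : Matrix (Fin d) (Fin d) ℝ =>
          Matrix.trace (NormedSpace.exp (A ⊙ A))) L B ∧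
      ∀ H : Matrix (Fin d) (Fin d) ℝ,
        L H = ∑ i : Fin d, ∑ j : Fin d,
          ((NormedSpace.exp (B ⊙ B))ᵀ ⊙ ((2 : ℝ) • B)) i j * H i j :=
  notears_constraint_hasFDerivAt_general d B
end

section
/- (Gradient of the polynomial constraint.) Let d ≥ 1, c > 0 and B ∈ ℝ^{d×d}. The function B ↦ Tr((I + c·B∘B)^d) is Fréchet differentiable at B, with derivative given by the linear map H ↦ Σ_{i,j} (((I + c·B∘B)^{d−1})ᵀ ∘ 2dc·B)_{ij} · H_{ij}; equivalently, its gradient with respect to the Frobenius inner product is the matrix ((I + c·B∘B)^{d−1})ᵀ ∘ (2dc·B). -/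
/-!
Chain rule: `A ↦ 1 + c • (A ⊙ A)` has derivative `H ↦ 2c • (B ⊙ H)` at `B`, and by the
noncommutative product rule together with cyclicity of the trace, `M ↦ Tr (M ^ d)` has derivative
`K ↦ d • Tr (M ^ (d - 1) * K)`. The gradient is then read off from the identity
`Tr (P * (B ⊙ H)) = ∑ i j, (Pᵀ ⊙ B) i j * H i j`.
-/

open Matrix
open scoped RightActions

attribute [local instance] Matrix.frobeniusNormedAddCommGroup Matrix.frobeniusNormedSpace
attribute [local instance] Matrix.frobeniusNormedRing Matrix.frobeniusNormedAlgebra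

namespace Matrix

variable {𝕜 m n : Type*} [Fintype m] [Fintype n]

theorem trace_mul_hadamard_s10 {R : Type*} [CommSemiring R] (A : Matrix n m R) (B C : Matrix m n R) :
    trace (A * (B ⊙ C)) = ∑ i, ∑ j, (Aᵀ ⊙ B) i j * C i j := by
  simp only [trace, diag_apply, mul_apply, hadamard_apply, transpose_apply]
  rw [Finset.sum_comm]
  simp only [mul_assoc]

section Frobenius

variable [NontriviallyNormedField 𝕜] [CompleteSpace 𝕜]

variable (𝕜 m n) in
noncomputable def hadamardCLM_s10 : Matrix m n 𝕜 →L[𝕜] Matrix m n 𝕜 →L[𝕜] Matrix m n 𝕜 :=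
  LinearMap.toContinuousLinearMap <| LinearMap.toContinuousLinearMap.toLinearMap ∘ₗ
    LinearMap.mk₂ 𝕜 (· ⊙ ·) (fun A B C => add_hadamard C A B) (fun c A B => smul_hadamard A B c)
      (fun A B C => hadamard_add A B C) (fun c A B => hadamard_smul A B c)

theorem hasFDerivAt_hadamard_self_s10 (A : Matrix m n 𝕜) :
    HasFDerivAt (fun X : Matrix m n 𝕜 => X ⊙ X) ((2 : 𝕜) • hadamardCLM_s10 𝕜 m n A) A := by
  refine ((hadamardCLM_s10 𝕜 m n).hasFDerivAt_of_bilinear (hasFDerivAt_id A)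
    (hasFDerivAt_id A)).congr_fderiv ?_
  ext1 H
  -- `change` rather than `simp`: the Frobenius topology and `Matrix`'s product topology are
  -- equal only up to unfolding, which blocks rewriting with the `ContinuousLinearMap` lemmas.
  change A ⊙ H + H ⊙ A = (2 : 𝕜) • (A ⊙ H)
  rw [hadamard_comm H, two_smul]

variable (𝕜 n) in
noncomputable def traceCLM_s10 : Matrix n n 𝕜 →L[𝕜] 𝕜 :=
  LinearMap.toContinuousLinearMap (traceLinearMap n 𝕜 𝕜)

end Frobenius

theorem hasFDerivAt_trace_pow [RCLike 𝕜] [DecidableEq n] {E : Type*} [NormedAddCommGroup E]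
    [NormedSpace 𝕜 E] {f : E → Matrix n n 𝕜} {f' : E →L[𝕜] Matrix n n 𝕜} {x : E}
    (hf : HasFDerivAt f f' x) (k : ℕ) :
    HasFDerivAt (fun y => trace (f y ^ k))
      ((k : 𝕜) • traceCLM_s10 𝕜 n ∘L ContinuousLinearMap.mul 𝕜 _ (f x ^ (k - 1)) ∘L f') x := by
  refine ((traceCLM_s10 𝕜 n).hasFDerivAt.comp x (hf.fun_pow' k)).congr_fderiv ?_
  ext1 h
  change trace ((∑ i ∈ Finset.range k, f x ^ (k.pred - i) •> f' <• f x ^ i) h)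
    = k * trace (f x ^ (k - 1) * f' h)
  simp only [_root_.sum_apply, _root_.smul_apply, smul_eq_mul, MulOpposite.smul_eq_mul_unop,
    MulOpposite.unop_op, trace_sum]
  have cyclic : ∀ i ∈ Finset.range k,
      trace (f x ^ (k.pred - i) * f' h * f x ^ i) = trace (f x ^ (k - 1) * f' h) := by
    intro i hi
    rw [trace_mul_cycle, ← pow_add, Nat.pred_eq_sub_one,
      Nat.add_sub_of_le (by simp at hi; omega)]
  rw [Finset.sum_congr rfl cyclic, Finset.sum_const, Finset.card_range, nsmul_eq_mul]

end Matrix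

theorem poly_constraint_hasFDerivAt_general
    (d : ℕ) (c : ℝ) (B : Matrix (Fin d) (Fin d) ℝ) :
    ∃ L : Matrix (Fin d) (Fin d) ℝ →L[ℝ] ℝ,
      HasFDerivAt (fun A : Matrix (Fin d) (Fin d) ℝ =>
          Matrix.trace ((1 + c • (A ⊙ A)) ^ d)) L B ∧
      ∀ H : Matrix (Fin d) (Fin d) ℝ,
        L H = ∑ i : Fin d, ∑ j : Fin d,
          (((1 + c • (B ⊙ B)) ^ (d - 1))ᵀ ⊙ ((2 * d * c : ℝ) • B)) i j * H i j := by
  refine ⟨_, hasFDerivAt_trace_pow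
    (((hasFDerivAt_hadamard_self_s10 B).const_smul c).const_add 1) d, fun H => ?_⟩
  change (d : ℝ) * trace ((1 + c • (B ⊙ B)) ^ (d - 1) * (c • (2 : ℝ) • (B ⊙ H))) = _
  simp only [hadamard_smul, Matrix.smul_apply, smul_eq_mul, mul_assoc, ← Finset.mul_sum,
    ← trace_mul_hadamard_s10, Matrix.mul_smul, trace_smul]
  ring

/-- Gradient of the polynomial constraint: `B ↦ Tr((I + c·B∘B)^d)` is Fréchet differentiable at
`B`, with derivative `H ↦ ⟨((I + c·B∘B)^{d−1})ᵀ ∘ 2dc·B, H⟩_F`; i.e. its Frobenius gradient is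
`((I + c·B∘B)^{d−1})ᵀ ∘ (2dc·B)`. -/
theorem poly_constraint_hasFDerivAt
    (d : ℕ) (hd : 1 ≤ d) (c : ℝ) (hc : 0 < c) (B : Matrix (Fin d) (Fin d) ℝ) :
    ∃ L : Matrix (Fin d) (Fin d) ℝ →L[ℝ] ℝ,
      HasFDerivAt (fun A : Matrix (Fin d) (Fin d) ℝ =>
          Matrix.trace ((1 + c • (A ⊙ A)) ^ d)) L B ∧
      ∀ H : Matrix (Fin d) (Fin d) ℝ,
        L H = ∑ i : Fin d, ∑ j : Fin d,
          (((1 + c • (B ⊙ B)) ^ (d - 1))ᵀ ⊙ ((2 * d * c : ℝ) • B)) i j * H i j :=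
  poly_constraint_hasFDerivAt_general d c B
end

section
/- (Failure of regularity / LICQ for the NOTEARS constraint.) Let d ≥ 1 and B ∈ ℝ^{d×d}. If Tr(exp(B∘B)) = d (i.e., B is a feasible point of the acyclicity constraint), then the Fréchet derivative of the map B ↦ Tr(exp(B∘B)) − d at B is the zero linear functional; in particular, no feasible point of the constraint Tr(exp(B∘B)) − d = 0 is a regular point (the linear independence constraint qualification fails at every feasible point). -/
open Matrix

attribute [local instance] Matrix.frobeniusNormedAddCommGroup Matrix.frobeniusNormedSpace

/-! The matrix `A ∘ A` is entrywise nonnegative, hence so is every term of its exponential series,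
and the `k = 0` term alone contributes `d` to the trace. So `Tr(exp(A∘A)) ≥ d` for all `A`: every
feasible point is a global minimiser of the constraint function, where its derivative vanishes. -/

theorem Matrix.one_le_exp_apply_self_of_nonneg {n : Type*} [Fintype n] [DecidableEq n]
    {M : Matrix n n ℝ} (hM : ∀ i j, 0 ≤ M i j) (i : n) :
    1 ≤ NormedSpace.exp M i i := by
  -- `exp` does not depend on the norm; a submultiplicative one only gives access to its series.
  let _ : NormedRing (Matrix n n ℝ) := Matrix.frobeniusNormedRing
  let _ : NormedAlgebra ℝ (Matrix n n ℝ) := Matrix.frobeniusNormedAlgebra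
  have hsum : HasSum (fun k : ℕ => ((k.factorial : ℝ)⁻¹ • M ^ k) i i) (NormedSpace.exp M i i) :=
    Pi.hasSum.1 (NormedSpace.exp_series_hasSum_exp' (𝕂 := ℝ) M).matrix_diag i
  calc (1 : ℝ) = ((Nat.factorial 0 : ℝ)⁻¹ • M ^ 0) i i := by simp
    _ ≤ _ := le_hasSum hsum 0 fun k _ => mul_nonneg (by positivity) (pow_apply_nonneg hM k i i)

theorem Matrix.card_le_trace_exp_of_nonneg {n : Type*} [Fintype n] [DecidableEq n]
    {M : Matrix n n ℝ} (hM : ∀ i j, 0 ≤ M i j) :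
    (Fintype.card n : ℝ) ≤ trace (NormedSpace.exp M) := by
  simpa [trace] using
    Finset.sum_le_sum fun i (_ : i ∈ Finset.univ) => one_le_exp_apply_self_of_nonneg hM i

theorem Matrix.card_le_trace_exp_hadamard_self {n : Type*} [Fintype n] [DecidableEq n]
    (A : Matrix n n ℝ) : (Fintype.card n : ℝ) ≤ trace (NormedSpace.exp (A ⊙ A)) :=
  card_le_trace_exp_of_nonneg fun i j => mul_self_nonneg (A i j)

theorem notears_constraint_licq_fails_general
    (d : ℕ) (B : Matrix (Fin d) (Fin d) ℝ)
    (hfeas : Matrix.trace (NormedSpace.exp (B ⊙ B)) = (d : ℝ)) :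
    fderiv ℝ (fun A : Matrix (Fin d) (Fin d) ℝ =>
      Matrix.trace (NormedSpace.exp (A ⊙ A)) - (d : ℝ)) B = 0 := by
  have hmin : IsLocalMin (fun A : Matrix (Fin d) (Fin d) ℝ =>
      Matrix.trace (NormedSpace.exp (A ⊙ A)) - (d : ℝ)) B :=
    Filter.Eventually.of_forall fun A => by
      simpa [hfeas] using Matrix.card_le_trace_exp_hadamard_self A
  exact hmin.fderiv_eq_zero

/-- Failure of regularity / LICQ for the NOTEARS constraint: at every feasible point `B` of the
constraint `Tr(exp(B∘B)) − d = 0`, the Fréchet derivative of the constraint function is the zero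
linear functional, so no feasible point is regular. -/
theorem notears_constraint_licq_fails
    (d : ℕ) (hd : 1 ≤ d) (B : Matrix (Fin d) (Fin d) ℝ)
    (hfeas : Matrix.trace (NormedSpace.exp (B ⊙ B)) = (d : ℝ)) :
    fderiv ℝ (fun A : Matrix (Fin d) (Fin d) ℝ =>
      Matrix.trace (NormedSpace.exp (A ⊙ A)) - (d : ℝ)) B = 0 :=
  notears_constraint_licq_fails_general d B hfeas
end

section
/- Let d ≥ 1 and B ∈ ℝ^{d×d}. If Tr(exp(B∘B)) = d, then all diagonal entries of B are zero, i.e., B_{ii} = 0 for every i. -/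
/-!
For a matrix `A` with nonnegative entries every term of the series `exp A = ∑ Aᵏ / k!` is
nonnegative, so `tr (exp A) ≥ tr 1 + tr A = d + tr A`. With `A = B ∘ B` the hypothesis forces
`tr (B ∘ B) = ∑ᵢ Bᵢᵢ² ≤ 0`, hence every `Bᵢᵢ` vanishes.
-/

open Matrix NormedSpace Nat

namespace Matrix

variable {n : Type*} [Fintype n] [DecidableEq n]

theorem one_add_le_exp_apply_of_nonneg {A : Matrix n n ℝ} (hA : ∀ i j, 0 ≤ A i j) (i j : n) :
    (1 + A) i j ≤ exp A i j := by
  -- `exp` is norm-independent; a submultiplicative norm is only needed to make the series converge.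
  let _ : NormedRing (Matrix n n ℝ) := Matrix.linftyOpNormedRing
  let _ : NormedAlgebra ℝ (Matrix n n ℝ) := Matrix.linftyOpNormedAlgebra
  have hexp : HasSum (fun k : ℕ => (k !⁻¹ : ℝ) • A ^ k) (exp A) := by
    rw [exp_eq_tsum ℝ]
    exact (expSeries_summable' A).hasSum
  have hexp_ij : HasSum (fun k : ℕ => (k !⁻¹ : ℝ) * (A ^ k) i j) (exp A i j) :=
    Pi.hasSum.mp (Pi.hasSum.mp hexp i) j
  calc (1 + A) i j = ∑ k ∈ Finset.range 2, (k !⁻¹ : ℝ) * (A ^ k) i j := by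
        simp [Finset.sum_range_succ]
    _ ≤ exp A i j := hexp_ij.tsum_eq ▸ hexp_ij.summable.sum_le_tsum _
          fun k _ => mul_nonneg (by positivity) (pow_apply_nonneg hA k i j)

theorem card_add_trace_le_trace_exp_of_nonneg {A : Matrix n n ℝ} (hA : ∀ i j, 0 ≤ A i j) :
    Fintype.card n + trace A ≤ trace (exp A) := by
  rw [← trace_one, ← trace_add]
  exact Finset.sum_le_sum fun i _ => one_add_le_exp_apply_of_nonneg hA i i

end Matrix

theorem notears_feasible_diag_zero_general
    (d : ℕ) (B : Matrix (Fin d) (Fin d) ℝ)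
    (h : Matrix.trace (NormedSpace.exp (B ⊙ B)) = (d : ℝ)) :
    ∀ i : Fin d, B i i = 0 := by
  have hdiag_nonneg : ∀ i ∈ Finset.univ, 0 ≤ B i i * B i i := fun i _ => mul_self_nonneg _
  have htrace : trace (B ⊙ B) = 0 := by
    have := card_add_trace_le_trace_exp_of_nonneg (A := B ⊙ B) fun i j => mul_self_nonneg (B i j)
    rw [h, Fintype.card_fin] at this
    exact le_antisymm (by linarith) (Finset.sum_nonneg hdiag_nonneg)
  intro i
  exact mul_self_eq_zero.mp <|
    (Finset.sum_eq_zero_iff_of_nonneg hdiag_nonneg).mp htrace i (Finset.mem_univ i)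

theorem notears_feasible_diag_zero
    (d : ℕ) (hd : 1 ≤ d) (B : Matrix (Fin d) (Fin d) ℝ)
    (h : Matrix.trace (NormedSpace.exp (B ⊙ B)) = (d : ℝ)) :
    ∀ i : Fin d, B i i = 0 :=
  notears_feasible_diag_zero_general d B h
end

section
/- Let d ≥ 1, c > 0 and B ∈ ℝ^{d×d}. If Tr((I + c·B∘B)^d) = d, then all diagonal entries of B are zero, i.e., B_{ii} = 0 for every i. -/
/-!
`M = I + c • (B ⊙ B)` has nonnegative entries, so `(M ^ k) i i ≥ (M i i) ^ k ≥ 1` by keeping only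
the constant closed walk at `i`. A trace equal to `d` then forces `(M i i) ^ d = 1`, i.e.
`M i i = 1 + c * B i i ^ 2 = 1`.
-/

namespace Matrix

variable {n R : Type*} [Fintype n] [DecidableEq n]

theorem apply_self_pow_le_pow_apply_self [Semiring R] [PartialOrder R] [IsOrderedRing R]
    {A : Matrix n n R} (hA : ∀ i j, 0 ≤ A i j) (k : ℕ) (i : n) :
    A i i ^ k ≤ (A ^ k) i i := by
  induction k with
  | zero => simp
  | succ k ih =>
    rw [pow_succ, pow_succ, mul_apply]
    calc A i i ^ k * A i i ≤ (A ^ k) i i * A i i := mul_le_mul_of_nonneg_right ih (hA i i)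
      _ ≤ ∑ j, (A ^ k) i j * A j i :=
        Finset.single_le_sum (fun j _ => mul_nonneg (pow_apply_nonneg hA k i j) (hA j i))
          (Finset.mem_univ i)

theorem apply_self_eq_one_of_trace_pow_eq_card [Semiring R] [LinearOrder R] [IsStrictOrderedRing R]
    {A : Matrix n n R} (hA : ∀ i j, 0 ≤ A i j) (hA_diag : ∀ i, 1 ≤ A i i) {k : ℕ} (hk : k ≠ 0)
    (h : trace (A ^ k) = Fintype.card n) (i : n) : A i i = 1 := by
  have h_le : ∀ j, A j j ^ k ≤ (A ^ k) j j := apply_self_pow_le_pow_apply_self hA k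
  have h_one_le : ∀ j ∈ Finset.univ, (1 : R) ≤ (A ^ k) j j :=
    fun j _ => (one_le_pow₀ (hA_diag j)).trans (h_le j)
  have h_sum : ∑ _j : n, (1 : R) = ∑ j, (A ^ k) j j := by simpa [trace] using h.symm
  have h_pow_eq : (A ^ k) i i = 1 :=
    ((Finset.sum_eq_sum_iff_of_le h_one_le).mp h_sum i (Finset.mem_univ i)).symm
  have h_pow_le : A i i ^ k ≤ 1 := h_pow_eq ▸ h_le i
  exact le_antisymm ((pow_le_one_iff_of_nonneg (hA i i) hk).mp h_pow_le) (hA_diag i)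

end Matrix

open Matrix

theorem poly_feasible_diag_zero_general
    (d : ℕ) (c : ℝ) (hc : 0 < c) (B : Matrix (Fin d) (Fin d) ℝ)
    (h : Matrix.trace ((1 + c • (B ⊙ B)) ^ d) = (d : ℝ)) :
    ∀ i : Fin d, B i i = 0 := by
  intro i
  set M := 1 + c • (B ⊙ B)
  have hM_diag : ∀ j, M j j = 1 + c * B j j ^ 2 := fun j => by simp [M, sq]
  have hM : ∀ j l, 0 ≤ M j l := fun j l =>
    add_nonneg (zero_le_one_elem j l) (mul_nonneg hc.le (mul_self_nonneg (B j l)))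
  have hM_diag_ge : ∀ j, 1 ≤ M j j := fun j => by
    rw [hM_diag]; exact le_add_of_nonneg_right (by positivity)
  have hMi := apply_self_eq_one_of_trace_pow_eq_card hM hM_diag_ge i.pos.ne'
    (by simpa using h) i
  rw [hM_diag, add_eq_left] at hMi
  exact pow_eq_zero_iff two_ne_zero |>.mp ((mul_eq_zero.mp hMi).resolve_left hc.ne')

theorem poly_feasible_diag_zero
    (d : ℕ) (hd : 1 ≤ d) (c : ℝ) (hc : 0 < c) (B : Matrix (Fin d) (Fin d) ℝ)
    (h : Matrix.trace ((1 + c • (B ⊙ B)) ^ d) = (d : ℝ)) :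
    ∀ i : Fin d, B i i = 0 :=
  poly_feasible_diag_zero_general d c hc B h
end
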